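/- (Shift isomorphism between the parity subalgebras, odd case.) Let t ≥ 1 be odd and ℓ ≥ 2, and let 𝒯, 𝒯°_+, 𝒯°_- be as in the parity decomposition of the restricted T-algebra. Then the assignment T^{(a)}_m(u) ↦ T^{(a)}_m(u + 1/t) defines a ring isomorphism 𝒯°_+ → 𝒯°_-. -/
import Mathlib


open scoped TensorProduct

/- We encode `u ∈ (1/t)ℤ` by the integer `n = t·u`; a triple `(a, m, u)` of the index
set `𝓘_ℓ` is encoded as `(a, m, n) : ℤ × ℤ × ℤ`. -/

/-- The index set `𝓘_ℓ` for the rank-2 Cartan matrix `M_t` (`t_1·ℓ = ℓ`, `t_2·ℓ = t·ℓ`). -/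
def Iset (t ℓ : ℤ) : Set (ℤ × ℤ × ℤ) :=
  {x | (x.1 = 1 ∧ 1 ≤ x.2.1 ∧ x.2.1 ≤ ℓ - 1) ∨ (x.1 = 2 ∧ 1 ≤ x.2.1 ∧ x.2.1 ≤ t * ℓ - 1)}

/-- The variable set: a variable `X_v` (left) and a variable `X'_v` (right) for each
`v ∈ 𝓘_ℓ`. -/
abbrev TVar (t ℓ : ℤ) : Type := ↥(Iset t ℓ) ⊕ ↥(Iset t ℓ)

/-- The element of the polynomial ring representing `T^{(a)}_m(u)`: the variable
`X_{(a,m,n)}` if `(a,m,n) ∈ 𝓘_ℓ`, and `1` otherwise (implementing the boundary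
conventions `T^{(a)}_0(u) = T^{(a)}_{t_aℓ}(u) = 1`). -/
noncomputable def Tv (t ℓ : ℤ) (a m n : ℤ) : MvPolynomial (TVar t ℓ) ℤ :=
  letI := Classical.dec (((a, m, n) : ℤ × ℤ × ℤ) ∈ Iset t ℓ)
  if h : ((a, m, n) : ℤ × ℤ × ℤ) ∈ Iset t ℓ then MvPolynomial.X (Sum.inl ⟨(a, m, n), h⟩)
  else 1

/-- The defining relations: the invertibility relations `X_v · X'_v − 1` together with
the T-system relations of `𝕋_ℓ(M_t)` (for `t` odd). -/
noncomputable def TRels (t ℓ : ℤ) : Set (MvPolynomial (TVar t ℓ) ℤ) :=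
  {p | ∃ v : ↥(Iset t ℓ), p = MvPolynomial.X (Sum.inl v) * MvPolynomial.X (Sum.inr v) - 1} ∪
  {p | ∃ m n : ℤ, ((1, m, n) : ℤ × ℤ × ℤ) ∈ Iset t ℓ ∧
      p = Tv t ℓ 1 m (n - t) * Tv t ℓ 1 m (n + t) -
        (Tv t ℓ 1 (m - 1) n * Tv t ℓ 1 (m + 1) n + Tv t ℓ 2 (t * m) n)} ∪
  {p | ∃ m n m' j : ℤ, ((2, m, n) : ℤ × ℤ × ℤ) ∈ Iset t ℓ ∧
      0 ≤ j ∧ j < t ∧ m = t * m' + j ∧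
      p = Tv t ℓ 2 m (n - 1) * Tv t ℓ 2 m (n + 1) -
        (Tv t ℓ 2 (m - 1) n * Tv t ℓ 2 (m + 1) n +
          (∏ k ∈ Finset.Icc (1 : ℤ) j, Tv t ℓ 1 (m' + 1) (n + (j + 1 - 2 * k))) *
            ∏ k ∈ Finset.Icc (1 : ℤ) (t - j), Tv t ℓ 1 m' (n + (t - j + 1 - 2 * k)))}

/-- The ring `𝒯 = 𝒯_ℓ(M_t)`. -/
noncomputable abbrev TRing (t ℓ : ℤ) : Type :=
  MvPolynomial (TVar t ℓ) ℤ ⧸ Ideal.span (TRels t ℓ)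

/-- The generator `T^{(a)}_m(u)` of `𝒯`, for `v = (a, m, n) ∈ 𝓘_ℓ`. -/
noncomputable def Tgen (t ℓ : ℤ) (v : ↥(Iset t ℓ)) : TRing t ℓ :=
  Ideal.Quotient.mk (Ideal.span (TRels t ℓ)) (MvPolynomial.X (Sum.inl v))

/-- The subring `𝒯°_ℓ(M_t)` generated by all the `T^{(a)}_m(u)`. -/
noncomputable def Tcirc (t ℓ : ℤ) : Subring (TRing t ℓ) :=
  Subring.closure {x | ∃ v : ↥(Iset t ℓ), x = Tgen t ℓ v}

/-- The parity condition `P_+` (for `t` odd): `m + tu` odd for `a = 1`,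
`m + tu` even for `a = 2`. -/
def PPlusOdd (x : ℤ × ℤ × ℤ) : Prop :=
  (x.1 = 1 ∧ Odd (x.2.1 + x.2.2)) ∨ (x.1 = 2 ∧ Even (x.2.1 + x.2.2))

/-- The subring `𝒯°_ℓ(M_t)_+` generated by the `T^{(a)}_m(u)` with `(a,m,u) : P_+`. -/
noncomputable def TcircPlus (t ℓ : ℤ) : Subring (TRing t ℓ) :=
  Subring.closure {x | ∃ v : ↥(Iset t ℓ), PPlusOdd (v : ℤ × ℤ × ℤ) ∧ x = Tgen t ℓ v}

/-- The subring `𝒯°_ℓ(M_t)_-` generated by the `T^{(a)}_m(u)` with `(a,m,u) : P_-`. -/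
noncomputable def TcircMinus (t ℓ : ℤ) : Subring (TRing t ℓ) :=
  Subring.closure {x | ∃ v : ↥(Iset t ℓ), ¬ PPlusOdd (v : ℤ × ℤ × ℤ) ∧ x = Tgen t ℓ v}

/-- The image of `T^{(a)}_m(u)` in `𝒯` for an arbitrary triple `(a, m, n)`
(equal to `1` at the boundary by convention). -/
noncomputable def Timg (t ℓ : ℤ) (a m n : ℤ) : TRing t ℓ :=
  Ideal.Quotient.mk (Ideal.span (TRels t ℓ)) (Tv t ℓ a m n)

/-! ### Auxiliary development for the shift isomorphism -/

lemma mem_Iset_shift' (t ℓ a m n n' : ℤ) :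
    ((a, m, n) : ℤ × ℤ × ℤ) ∈ Iset t ℓ ↔ ((a, m, n') : ℤ × ℤ × ℤ) ∈ Iset t ℓ := Iff.rfl

/-- Shift of the index set by `c` in the `n`-coordinate. -/
def shiftIdx (t ℓ c : ℤ) : ↥(Iset t ℓ) ≃ ↥(Iset t ℓ) where
  toFun v := ⟨(v.1.1, v.1.2.1, v.1.2.2 + c), v.2⟩
  invFun v := ⟨(v.1.1, v.1.2.1, v.1.2.2 - c), v.2⟩
  left_inv v := Subtype.ext (by obtain ⟨⟨a, m, n⟩, h⟩ := v; simp)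
  right_inv v := Subtype.ext (by obtain ⟨⟨a, m, n⟩, h⟩ := v; simp)

lemma shiftIdx_coe (t ℓ c : ℤ) (v : ↥(Iset t ℓ)) :
    (shiftIdx t ℓ c v : ℤ × ℤ × ℤ) = (v.1.1, v.1.2.1, v.1.2.2 + c) := rfl

lemma shiftIdx_shiftIdx (t ℓ c : ℤ) (v : ↥(Iset t ℓ)) :
    shiftIdx t ℓ c (shiftIdx t ℓ (-c) v) = v :=
  Subtype.ext (by obtain ⟨⟨a, m, n⟩, h⟩ := v; simp [shiftIdx])

/-- The shift ring automorphism of the polynomial ring. -/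
noncomputable def shiftEquiv (t ℓ c : ℤ) :
    MvPolynomial (TVar t ℓ) ℤ ≃+* MvPolynomial (TVar t ℓ) ℤ :=
  (MvPolynomial.renameEquiv ℤ (Equiv.sumCongr (shiftIdx t ℓ c) (shiftIdx t ℓ c))).toRingEquiv

lemma shiftEquiv_X_inl (t ℓ c : ℤ) (v : ↥(Iset t ℓ)) :
    shiftEquiv t ℓ c (MvPolynomial.X (Sum.inl v)) =
      MvPolynomial.X (Sum.inl (shiftIdx t ℓ c v)) := by
  simp [shiftEquiv]

lemma shiftEquiv_X_inr (t ℓ c : ℤ) (v : ↥(Iset t ℓ)) :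
    shiftEquiv t ℓ c (MvPolynomial.X (Sum.inr v)) =
      MvPolynomial.X (Sum.inr (shiftIdx t ℓ c v)) := by
  simp [shiftEquiv]

lemma shiftEquiv_Tv (t ℓ c a m n : ℤ) :
    shiftEquiv t ℓ c (Tv t ℓ a m n) = Tv t ℓ a m (n + c) := by
  classical
  by_cases h : ((a, m, n) : ℤ × ℤ × ℤ) ∈ Iset t ℓ
  · have h' : ((a, m, n + c) : ℤ × ℤ × ℤ) ∈ Iset t ℓ := h
    rw [Tv, Tv, dif_pos h, dif_pos h', shiftEquiv_X_inl]
    rfl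
  · have h' : ¬ ((a, m, n + c) : ℤ × ℤ × ℤ) ∈ Iset t ℓ := h
    rw [Tv, Tv, dif_neg h, dif_neg h', map_one]

lemma shiftEquiv_relInv (t ℓ c : ℤ) (v : ↥(Iset t ℓ)) :
    shiftEquiv t ℓ c (MvPolynomial.X (Sum.inl v) * MvPolynomial.X (Sum.inr v) - 1) =
      MvPolynomial.X (Sum.inl (shiftIdx t ℓ c v)) *
        MvPolynomial.X (Sum.inr (shiftIdx t ℓ c v)) - 1 := by
  rw [map_sub, map_mul, map_one, shiftEquiv_X_inl, shiftEquiv_X_inr]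

lemma shiftEquiv_rel1 (t ℓ c m n : ℤ) :
    shiftEquiv t ℓ c (Tv t ℓ 1 m (n - t) * Tv t ℓ 1 m (n + t) -
        (Tv t ℓ 1 (m - 1) n * Tv t ℓ 1 (m + 1) n + Tv t ℓ 2 (t * m) n)) =
      Tv t ℓ 1 m ((n + c) - t) * Tv t ℓ 1 m ((n + c) + t) -
        (Tv t ℓ 1 (m - 1) (n + c) * Tv t ℓ 1 (m + 1) (n + c) + Tv t ℓ 2 (t * m) (n + c)) := by
  rw [map_sub, map_add, map_mul, map_mul, shiftEquiv_Tv, shiftEquiv_Tv, shiftEquiv_Tv,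
    shiftEquiv_Tv, shiftEquiv_Tv, show n - t + c = n + c - t by ring,
    show n + t + c = n + c + t by ring]

lemma shiftEquiv_rel2 (t ℓ c m n m' j : ℤ) :
    shiftEquiv t ℓ c (Tv t ℓ 2 m (n - 1) * Tv t ℓ 2 m (n + 1) -
        (Tv t ℓ 2 (m - 1) n * Tv t ℓ 2 (m + 1) n +
          (∏ k ∈ Finset.Icc (1 : ℤ) j, Tv t ℓ 1 (m' + 1) (n + (j + 1 - 2 * k))) *
            ∏ k ∈ Finset.Icc (1 : ℤ) (t - j), Tv t ℓ 1 m' (n + (t - j + 1 - 2 * k)))) =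
      Tv t ℓ 2 m ((n + c) - 1) * Tv t ℓ 2 m ((n + c) + 1) -
        (Tv t ℓ 2 (m - 1) (n + c) * Tv t ℓ 2 (m + 1) (n + c) +
          (∏ k ∈ Finset.Icc (1 : ℤ) j, Tv t ℓ 1 (m' + 1) ((n + c) + (j + 1 - 2 * k))) *
            ∏ k ∈ Finset.Icc (1 : ℤ) (t - j), Tv t ℓ 1 m' ((n + c) + (t - j + 1 - 2 * k))) := by
  rw [map_sub, map_add, map_mul, map_mul, map_mul, map_prod, map_prod]
  simp only [shiftEquiv_Tv]
  rw [show n - 1 + c = n + c - 1 by ring, show n + 1 + c = n + c + 1 by ring]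
  have h1 : (∏ k ∈ Finset.Icc (1 : ℤ) j, Tv t ℓ 1 (m' + 1) (n + (j + 1 - 2 * k) + c)) =
      ∏ k ∈ Finset.Icc (1 : ℤ) j, Tv t ℓ 1 (m' + 1) ((n + c) + (j + 1 - 2 * k)) :=
    Finset.prod_congr rfl fun k _ => by
      rw [show n + (j + 1 - 2 * k) + c = n + c + (j + 1 - 2 * k) by ring]
  have h2 : (∏ k ∈ Finset.Icc (1 : ℤ) (t - j), Tv t ℓ 1 m' (n + (t - j + 1 - 2 * k) + c)) =
      ∏ k ∈ Finset.Icc (1 : ℤ) (t - j), Tv t ℓ 1 m' ((n + c) + (t - j + 1 - 2 * k)) :=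
    Finset.prod_congr rfl fun k _ => by
      rw [show n + (t - j + 1 - 2 * k) + c = n + c + (t - j + 1 - 2 * k) by ring]
  rw [h1, h2]

lemma shiftEquiv_mem_TRels (t ℓ c : ℤ) {p : MvPolynomial (TVar t ℓ) ℤ}
    (hp : p ∈ TRels t ℓ) : shiftEquiv t ℓ c p ∈ TRels t ℓ := by
  rcases hp with (⟨v, rfl⟩ | ⟨m, n, hmem, rfl⟩) | ⟨m, n, m', j, hmem, hj0, hjt, hm, rfl⟩
  · exact Or.inl (Or.inl ⟨shiftIdx t ℓ c v, shiftEquiv_relInv t ℓ c v⟩)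
  · exact Or.inl (Or.inr ⟨m, n + c, hmem, shiftEquiv_rel1 t ℓ c m n⟩)
  · exact Or.inr ⟨m, n + c, m', j, hmem, hj0, hjt, hm, shiftEquiv_rel2 t ℓ c m n m' j⟩

lemma image_TRels (t ℓ : ℤ) : shiftEquiv t ℓ 1 '' TRels t ℓ = TRels t ℓ := by
  apply Set.Subset.antisymm
  · rintro p ⟨q, hq, rfl⟩
    exact shiftEquiv_mem_TRels t ℓ 1 hq
  · rintro p hp
    rcases hp with (⟨v, rfl⟩ | ⟨m, n, hmem, rfl⟩) | ⟨m, n, m', j, hmem, hj0, hjt, hm, rfl⟩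
    · refine ⟨MvPolynomial.X (Sum.inl (shiftIdx t ℓ (-1) v)) *
        MvPolynomial.X (Sum.inr (shiftIdx t ℓ (-1) v)) - 1,
        Or.inl (Or.inl ⟨_, rfl⟩), ?_⟩
      rw [shiftEquiv_relInv, shiftIdx_shiftIdx]
    · refine ⟨Tv t ℓ 1 m ((n - 1) - t) * Tv t ℓ 1 m ((n - 1) + t) -
        (Tv t ℓ 1 (m - 1) (n - 1) * Tv t ℓ 1 (m + 1) (n - 1) + Tv t ℓ 2 (t * m) (n - 1)),
        Or.inl (Or.inr ⟨m, n - 1, hmem, rfl⟩), ?_⟩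
      rw [shiftEquiv_rel1, show n - 1 + 1 = n by ring]
    · refine ⟨Tv t ℓ 2 m ((n - 1) - 1) * Tv t ℓ 2 m ((n - 1) + 1) -
        (Tv t ℓ 2 (m - 1) (n - 1) * Tv t ℓ 2 (m + 1) (n - 1) +
          (∏ k ∈ Finset.Icc (1 : ℤ) j, Tv t ℓ 1 (m' + 1) ((n - 1) + (j + 1 - 2 * k))) *
            ∏ k ∈ Finset.Icc (1 : ℤ) (t - j), Tv t ℓ 1 m' ((n - 1) + (t - j + 1 - 2 * k))),
        Or.inr ⟨m, n - 1, m', j, hmem, hj0, hjt, hm, rfl⟩, ?_⟩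
      rw [shiftEquiv_rel2, show n - 1 + 1 = n by ring]

lemma span_TRels_eq (t ℓ : ℤ) :
    Ideal.span (TRels t ℓ) =
      Ideal.map ((shiftEquiv t ℓ 1 : MvPolynomial (TVar t ℓ) ℤ ≃+*
        MvPolynomial (TVar t ℓ) ℤ) : MvPolynomial (TVar t ℓ) ℤ →+* MvPolynomial (TVar t ℓ) ℤ)
        (Ideal.span (TRels t ℓ)) := by
  rw [Ideal.map_span]
  congr 1
  have : ⇑((shiftEquiv t ℓ 1 : MvPolynomial (TVar t ℓ) ℤ ≃+* MvPolynomial (TVar t ℓ) ℤ) :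
      MvPolynomial (TVar t ℓ) ℤ →+* MvPolynomial (TVar t ℓ) ℤ) = ⇑(shiftEquiv t ℓ 1) := rfl
  rw [this, image_TRels]

/-- The shift automorphism of `𝒯`. -/
noncomputable def sigmaEquiv (t ℓ : ℤ) : TRing t ℓ ≃+* TRing t ℓ :=
  Ideal.quotientEquiv _ _ (shiftEquiv t ℓ 1) (span_TRels_eq t ℓ)

lemma sigmaEquiv_mk (t ℓ : ℤ) (p : MvPolynomial (TVar t ℓ) ℤ) :
    sigmaEquiv t ℓ (Ideal.Quotient.mk (Ideal.span (TRels t ℓ)) p) =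
      Ideal.Quotient.mk (Ideal.span (TRels t ℓ)) (shiftEquiv t ℓ 1 p) :=
  Ideal.quotientEquiv_mk _ _ _ _ p

lemma sigmaEquiv_Tgen (t ℓ : ℤ) (v : ↥(Iset t ℓ)) :
    sigmaEquiv t ℓ (Tgen t ℓ v) = Tgen t ℓ (shiftIdx t ℓ 1 v) := by
  rw [Tgen, sigmaEquiv_mk, shiftEquiv_X_inl, Tgen]

lemma pplus_flip (a m n : ℤ) (ha : a = 1 ∨ a = 2) :
    PPlusOdd (a, m, n + 1) ↔ ¬ PPlusOdd (a, m, n) := by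
  rcases ha with rfl | rfl <;>
    simp only [PPlusOdd, Int.even_iff, Int.odd_iff] <;>
    norm_num <;> omega

lemma pplus_shift (t ℓ : ℤ) (v : ↥(Iset t ℓ)) :
    PPlusOdd ((shiftIdx t ℓ 1 v : ℤ × ℤ × ℤ)) ↔ ¬ PPlusOdd (v : ℤ × ℤ × ℤ) := by
  obtain ⟨⟨a, m, n⟩, h⟩ := v
  exact pplus_flip a m n (h.imp (fun x => x.1) (fun x => x.1))

lemma map_TcircPlus (t ℓ : ℤ) :
    (TcircPlus t ℓ).map (sigmaEquiv t ℓ).toRingHom = TcircMinus t ℓ := by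
  rw [TcircPlus, TcircMinus, RingHom.map_closure]
  congr 1
  ext x
  constructor
  · rintro ⟨_, ⟨v, hv, rfl⟩, rfl⟩
    refine ⟨shiftIdx t ℓ 1 v, ?_, ?_⟩
    · rw [pplus_shift]; exact not_not_intro hv
    · exact (sigmaEquiv_Tgen t ℓ v).symm ▸ rfl
  · rintro ⟨w, hw, rfl⟩
    refine ⟨Tgen t ℓ (shiftIdx t ℓ (-1) w), ⟨shiftIdx t ℓ (-1) w, ?_, rfl⟩, ?_⟩
    · have hps := pplus_shift t ℓ (shiftIdx t ℓ (-1) w)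
      rw [shiftIdx_shiftIdx] at hps
      by_contra hc
      exact hw (hps.mpr hc)
    · show sigmaEquiv t ℓ (Tgen t ℓ (shiftIdx t ℓ (-1) w)) = Tgen t ℓ w
      rw [sigmaEquiv_Tgen, shiftIdx_shiftIdx]

/-- Shift isomorphism between the parity subalgebras, odd case: the assignment
`T^{(a)}_m(u) ↦ T^{(a)}_m(u + 1/t)` defines a ring isomorphism `𝒯°_+ → 𝒯°_-`. -/
theorem Tcirc_shift_isomorphism (t ℓ : ℤ) (ht : 1 ≤ t) (htodd : Odd t) (hℓ : 2 ≤ ℓ) :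
    ∃ e : (TcircPlus t ℓ) ≃+* (TcircMinus t ℓ),
      ∀ (v : ↥(Iset t ℓ)), PPlusOdd (v : ℤ × ℤ × ℤ) →
        ∀ hx : Tgen t ℓ v ∈ TcircPlus t ℓ,
          ((e ⟨Tgen t ℓ v, hx⟩ : TcircMinus t ℓ) : TRing t ℓ) =
            Timg t ℓ (v : ℤ × ℤ × ℤ).1 (v : ℤ × ℤ × ℤ).2.1 ((v : ℤ × ℤ × ℤ).2.2 + 1) := by
  refine ⟨(RingEquiv.subringMap (s := TcircPlus t ℓ) (sigmaEquiv t ℓ)).trans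
    (RingEquiv.subringCongr (map_TcircPlus t ℓ)), ?_⟩
  intro v hv hx
  show sigmaEquiv t ℓ (Tgen t ℓ v) =
    Timg t ℓ (v : ℤ × ℤ × ℤ).1 (v : ℤ × ℤ × ℤ).2.1 ((v : ℤ × ℤ × ℤ).2.2 + 1)
  obtain ⟨⟨a, m, n⟩, h⟩ := v
  rw [sigmaEquiv_Tgen, Timg, Tv,
    dif_pos (show ((a, m, n + 1) : ℤ × ℤ × ℤ) ∈ Iset t ℓ from h)]
  rfl
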